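/- arXiv:math/9204219 — 2 statements merged into one kernel-verified Lean document; each statement's English description precedes it below -/
import Mathlib

section
/- If a ladder system ζ on S ⊆ [ω, ω₁) satisfies 3-uniformization and each h_α : ω → ω is a function with positive values, then there is a ladder system η on S satisfying H-uniformization, where H = ⟨h_α : α ∈ S⟩. (More precisely: composing each tree-like ladder ζ_α with the partial-sum function ψ_α(n) = Σ_{j≤n} h_α(j) yields a ladder system ζ' satisfying H-uniformization, via coding each H-coloring as a 3-coloring.) -/
open Ordinal Set

noncomputable def omega1 : Ordinal := (Cardinal.aleph 1).ord

def IsLadderOn (δ : Ordinal) (η : ℕ → Ordinal) : Prop :=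
  StrictMono η ∧ (∀ n, η n < δ) ∧ ∀ β < δ, ∃ n, β ≤ η n

def IsLadderAt (α : Ordinal) (η : ℕ → Ordinal) : Prop :=
  ∃ (δ : Ordinal) (n : ℕ), Order.IsSuccLimit δ ∧ α = δ + n ∧ IsLadderOn δ η

def IsClubOmega1 (C : Set Ordinal) : Prop :=
  C ⊆ Set.Iio omega1 ∧
  (∀ α < omega1, ∃ β ∈ C, α < β) ∧
  (∀ δ < omega1, Order.IsSuccLimit δ → (∀ α < δ, ∃ β ∈ C, α < β ∧ β < δ) → δ ∈ C)

def IsStat (S : Set Ordinal) : Prop := ∀ C, IsClubOmega1 C → (S ∩ C).Nonempty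

def UnifBelow (S : Set Ordinal) (η : Ordinal → ℕ → Ordinal) (h : Ordinal → ℕ → ℕ) : Prop :=
  ∀ c : Ordinal → ℕ → ℕ, (∀ α ∈ S, ∀ n, c α n < h α n) →
    ∃ (f : Ordinal → ℕ) (fs : Ordinal → ℕ), ∀ α ∈ S, ∀ n, fs α ≤ n → f (η α n) = c α n

def LambdaUnif (S : Set Ordinal) (η : Ordinal → ℕ → Ordinal) (l : ℕ) : Prop :=
  UnifBelow S η (fun _ _ => l)

def OmegaUnif (S : Set Ordinal) (η : Ordinal → ℕ → Ordinal) : Prop :=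
  ∀ c : Ordinal → ℕ → ℕ,
    ∃ (f : Ordinal → ℕ) (fs : Ordinal → ℕ), ∀ α ∈ S, ∀ n, fs α ≤ n → f (η α n) = c α n

def TreeLike (S : Set Ordinal) (η : Ordinal → ℕ → Ordinal) : Prop :=
  ∀ α ∈ S, ∀ β ∈ S, ∀ n m, η α n = η β m → n = m ∧ ∀ k ≤ n, η α k = η β k

def StronglyTreeLike (S : Set Ordinal) (η : Ordinal → ℕ → Ordinal) (F : Ordinal → ℕ) : Prop :=
  TreeLike S η ∧ ∀ α ∈ S, ∀ β ∈ S, ∀ n m, η α n = η β m → F α = F β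

/-!
The new ladder point `η α n` is an ordinal code of the initial segment of `ζ α` up to the end
of the `n`-th block, where block `t` has length `h α t + 1`. Each step of the code stores its
arguments as natural numbers (via an injection of the countable set `Iic M` into `ℕ`) inside the
`ω`-block of the largest ordinal `M` involved, so the codes stay below every limit above their
arguments: `η α` is again a ladder at `α`, and injectivity of the coding makes `η` tree-like.

An `H`-colouring `c` becomes a 3-colouring of `ζ`: every block starts with a marker `2`,
followed by `c α t` ones and then zeros. A uniformizing function `f` of this colouring is
eventually correct along `ζ α`, so `c α n` is the number of ones after the last marker in
`f ∘ ζ α` below the end of block `n`. As `η α n` determines `ζ α` up to that point, this count is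
a function of the ladder point alone.
-/

lemma isSuccLimit_omega1 : Order.IsSuccLimit omega1 := by
  rw [omega1, Cardinal.ord_aleph]
  exact Cardinal.isSuccLimit_omega 1

lemma countable_Iic_of_lt_omega1 {M : Ordinal} (hM : M < omega1) : (Iic M).Countable := by
  rw [← Cardinal.le_aleph0_iff_set_countable, ← Order.Iio_succ, Cardinal.mk_Iio_ordinal,
    Cardinal.lift_le_aleph0, ← Order.lt_succ_iff, Cardinal.succ_aleph0, ← Cardinal.lt_ord]
  exact isSuccLimit_omega1.succ_lt hM

lemma IsLadderAt.apply_lt {α : Ordinal} {g : ℕ → Ordinal} (hg : IsLadderAt α g) (i : ℕ) :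
    g i < α := by
  obtain ⟨δ, k, -, rfl, -, hlt, -⟩ := hg
  exact (hlt i).trans_le le_self_add

noncomputable def finitePart (o : Ordinal) : ℕ :=
  (lt_omega0.1 (mod_lt o omega0_ne_zero)).choose

lemma mod_omega0_eq_finitePart (o : Ordinal) : o % ω = finitePart o :=
  (lt_omega0.1 (mod_lt o omega0_ne_zero)).choose_spec

noncomputable def tag (M : Ordinal) (t : ℕ) : Ordinal :=
  ω * (M / ω) + (Nat.pair (finitePart M) t : ℕ)

lemma le_tag (M : Ordinal) (t : ℕ) : M ≤ tag M t := by
  conv_lhs => rw [← div_add_mod M ω, mod_omega0_eq_finitePart]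
  unfold tag
  gcongr
  exact Nat.left_le_pair _ _

lemma tag_lt_of_isSuccLimit {δ M : Ordinal} (hδ : Order.IsSuccLimit δ) (hM : M < δ) (t : ℕ) :
    tag M t < δ :=
  hδ.add_natCast_lt ((mul_div_le M ω).trans_lt hM) _

lemma tag_inj {M M' : Ordinal} {t t' : ℕ} (h : tag M t = tag M' t') : M = M' ∧ t = t' := by
  have hdiv : M / ω = M' / ω := by
    simpa [tag, mul_add_div _ omega0_ne_zero, div_eq_zero_of_lt (natCast_lt_omega0 _)] using
      congrArg (· / ω) h
  rw [tag, tag, hdiv, add_right_inj, Nat.cast_inj] at h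
  obtain ⟨hfin, rfl⟩ := Nat.pair_eq_pair.1 h
  refine ⟨?_, rfl⟩
  rw [← div_add_mod M ω, ← div_add_mod M' ω, mod_omega0_eq_finitePart,
    mod_omega0_eq_finitePart, hdiv, hfin]

noncomputable def enumIic (M : Ordinal) : Ordinal → ℕ :=
  if hM : M < omega1 then (countable_iff_exists_injOn.1 (countable_Iic_of_lt_omega1 hM)).choose
  else 0

lemma injOn_enumIic {M : Ordinal} (hM : M < omega1) : InjOn (enumIic M) (Iic M) := by
  rw [enumIic, dif_pos hM]
  exact (countable_iff_exists_injOn.1 (countable_Iic_of_lt_omega1 hM)).choose_spec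

noncomputable def pairCode (x y : Ordinal) (n : ℕ) : Ordinal :=
  tag (max x y) (Nat.pair n (Nat.pair (enumIic (max x y) x) (enumIic (max x y) y)))

lemma left_le_pairCode (x y : Ordinal) (n : ℕ) : x ≤ pairCode x y n :=
  (le_max_left x y).trans (le_tag _ _)

lemma right_le_pairCode (x y : Ordinal) (n : ℕ) : y ≤ pairCode x y n :=
  (le_max_right x y).trans (le_tag _ _)

lemma pairCode_lt_of_isSuccLimit {δ x y : Ordinal} (hδ : Order.IsSuccLimit δ) (hx : x < δ)
    (hy : y < δ) (n : ℕ) : pairCode x y n < δ :=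
  tag_lt_of_isSuccLimit hδ (max_lt hx hy) _

lemma pairCode_inj {x y x' y' : Ordinal} {n n' : ℕ} (hx : x < omega1) (hy : y < omega1)
    (h : pairCode x y n = pairCode x' y' n') : x = x' ∧ y = y' ∧ n = n' := by
  obtain ⟨hM, ht⟩ := tag_inj h
  obtain ⟨hn, hxy⟩ := Nat.pair_eq_pair.1 ht
  obtain ⟨hex, hey⟩ := Nat.pair_eq_pair.1 hxy
  rw [← hM] at hex hey
  have hinj := injOn_enumIic (max_lt hx hy)
  exact ⟨hinj (le_max_left x y) ((le_max_left x' y').trans hM.ge) hex,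
    hinj (le_max_right x y) ((le_max_right x' y').trans hM.ge) hey, hn⟩

noncomputable def historyCode (g : ℕ → Ordinal) : ℕ → Ordinal
  | 0 => pairCode 0 (g 0) 0
  | n + 1 => pairCode (historyCode g n) (g (n + 1)) (n + 1)

lemma le_historyCode (g : ℕ → Ordinal) : ∀ n, g n ≤ historyCode g n
  | 0 => right_le_pairCode _ _ _
  | _ + 1 => right_le_pairCode _ _ _

lemma historyCode_lt_of_isSuccLimit {δ : Ordinal} {g : ℕ → Ordinal} (hδ : Order.IsSuccLimit δ)
    (hg : ∀ i, g i < δ) : ∀ n, historyCode g n < δ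
  | 0 => pairCode_lt_of_isSuccLimit hδ hδ.bot_lt (hg 0) _
  | n + 1 => pairCode_lt_of_isSuccLimit hδ (historyCode_lt_of_isSuccLimit hδ hg n) (hg _) _

lemma historyCode_inj {g g' : ℕ → Ordinal} (hg : ∀ i, g i < omega1) {n m : ℕ}
    (h : historyCode g n = historyCode g' m) : n = m ∧ ∀ i ≤ n, g i = g' i := by
  induction n generalizing m with
  | zero =>
    cases m with
    | zero =>
      obtain ⟨-, h0, -⟩ := pairCode_inj isSuccLimit_omega1.bot_lt (hg 0) h
      exact ⟨rfl, fun i hi => by rwa [Nat.le_zero.1 hi]⟩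
    | succ m => exact absurd (pairCode_inj isSuccLimit_omega1.bot_lt (hg 0) h).2.2 (by omega)
  | succ n ih =>
    cases m with
    | zero =>
      exact absurd (pairCode_inj (historyCode_lt_of_isSuccLimit isSuccLimit_omega1 hg n) (hg _)
        h).2.2 (by omega)
    | succ m =>
      obtain ⟨hprev, hlast, hnm⟩ :=
        pairCode_inj (historyCode_lt_of_isSuccLimit isSuccLimit_omega1 hg n) (hg _) h
      obtain ⟨rfl, hagree⟩ := ih hprev
      refine ⟨rfl, fun i hi => ?_⟩
      rcases Nat.of_le_succ hi with hi | rfl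
      exacts [hagree i hi, hlast]

lemma historyCode_strictMono {g : ℕ → Ordinal} (hg : ∀ i, g i < omega1) :
    StrictMono (historyCode g) :=
  strictMono_nat_of_lt_succ fun n => (left_le_pairCode _ _ _).lt_of_ne fun h => by
    have h' : historyCode g n = historyCode g (n + 1) := h
    have := (historyCode_inj hg h').1
    omega

lemma IsLadderAt.historyCode_comp {α : Ordinal} {g : ℕ → Ordinal} {ψ : ℕ → ℕ}
    (hg : IsLadderAt α g) (hα : α < omega1) (hψ : StrictMono ψ) :
    IsLadderAt α (historyCode g ∘ ψ) := by
  have hgω : ∀ i, g i < omega1 := fun i => (hg.apply_lt i).trans hα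
  obtain ⟨δ, k, hδ, rfl, hmono, hlt, hcof⟩ := hg
  refine ⟨δ, k, hδ, rfl, (historyCode_strictMono hgω).comp hψ,
    fun n => historyCode_lt_of_isSuccLimit hδ hlt _, fun β hβ => ?_⟩
  obtain ⟨i, hi⟩ := hcof β hβ
  exact ⟨i, hi.trans ((hmono.monotone (hψ.id_le i)).trans (le_historyCode g _))⟩

lemma Nat.findGreatest_congr {P Q : ℕ → Prop} [DecidablePred P] [DecidablePred Q] {b : ℕ}
    (h : ∀ i ≤ b, (P i ↔ Q i)) : Nat.findGreatest P b = Nat.findGreatest Q b := by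
  obtain ⟨hle, hP, hgreatest⟩ := Nat.findGreatest_eq_iff.1 (rfl : Nat.findGreatest P b = _)
  rw [eq_comm, Nat.findGreatest_eq_iff]
  exact ⟨hle, fun h0 => (h _ hle).1 (hP h0), fun n h1 h2 hQ => hgreatest h1 h2 ((h n h2).2 hQ)⟩

section BlockCoding

variable (u : ℕ → ℕ)

def blockStart (t : ℕ) : ℕ :=
  ∑ j ∈ Finset.range t, (u j + 1)

lemma blockStart_succ (t : ℕ) : blockStart u (t + 1) = blockStart u t + u t + 1 := by
  rw [blockStart, Finset.sum_range_succ, ← add_assoc]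
  rfl

lemma blockStart_strictMono : StrictMono (blockStart u) :=
  strictMono_nat_of_lt_succ fun t => by rw [blockStart_succ]; omega

lemma eq_of_mem_Ico_blockStart {i t t' : ℕ}
    (ht : i ∈ Ico (blockStart u t) (blockStart u (t + 1)))
    (ht' : i ∈ Ico (blockStart u t') (blockStart u (t' + 1))) : t = t' := by
  by_contra hne
  exact disjoint_left.1
    ((blockStart_strictMono u).monotone.pairwise_disjoint_on_Ico_succ hne) ht ht'

open Classical in
noncomputable def unaryCode (c : ℕ → ℕ) (i : ℕ) : ℕ :=
  if ∃ t, i = blockStart u t then 2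
  else if ∃ t, blockStart u t < i ∧ i ≤ blockStart u t + c t then 1 else 0

variable {u}

lemma unaryCode_lt_three (c : ℕ → ℕ) (i : ℕ) : unaryCode u c i < 3 := by
  unfold unaryCode
  split_ifs <;> omega

lemma unaryCode_blockStart (c : ℕ → ℕ) (t : ℕ) : unaryCode u c (blockStart u t) = 2 :=
  if_pos ⟨t, rfl⟩

lemma unaryCode_of_mem_Ioo {c : ℕ → ℕ} (hc : ∀ t, c t < u t) {i t : ℕ}
    (hi : i ∈ Ioo (blockStart u t) (blockStart u (t + 1))) :
    unaryCode u c i = if i ≤ blockStart u t + c t then 1 else 0 := by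
  have hblock : ∀ t', i ∈ Ico (blockStart u t') (blockStart u (t' + 1)) → t' = t :=
    fun t' ht' => eq_of_mem_Ico_blockStart u ht' (Ioo_subset_Ico_self hi)
  have hnot : ¬∃ t', i = blockStart u t' := by
    rintro ⟨t', rfl⟩
    obtain rfl := hblock t' ⟨le_rfl, blockStart_strictMono u t'.lt_succ_self⟩
    exact hi.1.ne rfl
  have hones : (∃ t', blockStart u t' < i ∧ i ≤ blockStart u t' + c t') ↔
      i ≤ blockStart u t + c t := by
    refine ⟨fun ⟨t', h1, h2⟩ => ?_, fun h => ⟨t, hi.1, h⟩⟩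
    obtain rfl := hblock t' ⟨h1.le, by have := hc t'; rw [blockStart_succ]; omega⟩
    exact h2
  simp only [unaryCode, if_neg hnot, hones]

def scanCount (v : ℕ → ℕ) (k : ℕ) : ℕ :=
  ((Finset.Ioo (Nat.findGreatest (v · = 2) (k - 1)) k).filter (v · = 1)).card

lemma scanCount_congr {v w : ℕ → ℕ} {k : ℕ} (h : ∀ i ≤ k, v i = w i) :
    scanCount v k = scanCount w k := by
  have hfg : Nat.findGreatest (v · = 2) (k - 1) = Nat.findGreatest (w · = 2) (k - 1) :=
    Nat.findGreatest_congr fun i hi => by rw [h i (by omega)]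
  rw [scanCount, scanCount, hfg]
  congr 1
  exact Finset.filter_congr fun i hi => by rw [h i (Finset.mem_Ioo.1 hi).2.le]

lemma scanCount_eq_of_eqOn_block {c v : ℕ → ℕ} (hc : ∀ t, c t < u t) {t : ℕ}
    (hv : ∀ i ∈ Ico (blockStart u t) (blockStart u (t + 1)), v i = unaryCode u c i) :
    scanCount v (blockStart u (t + 1)) = c t := by
  have hend := blockStart_succ u t
  have hct := hc t
  set a := blockStart u t
  have hmarker : v a = 2 := by rw [hv a ⟨le_rfl, by omega⟩, unaryCode_blockStart]
  have hinner : ∀ i, a < i → i < blockStart u (t + 1) → v i = if i ≤ a + c t then 1 else 0 :=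
    fun i h1 h2 => by rw [hv i ⟨h1.le, h2⟩, unaryCode_of_mem_Ioo hc ⟨h1, h2⟩]
  have hlast : Nat.findGreatest (v · = 2) (blockStart u (t + 1) - 1) = a := by
    rw [Nat.findGreatest_eq_iff]
    refine ⟨by omega, fun _ => hmarker, fun i h1 h2 => ?_⟩
    rw [hinner i h1 (by omega)]
    split_ifs <;> simp
  have hones : (Finset.Ioo a (blockStart u (t + 1))).filter (v · = 1) =
      Finset.Ioc a (a + c t) := by
    ext i
    simp only [Finset.mem_filter, Finset.mem_Ioo, Finset.mem_Ioc]
    constructor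
    · rintro ⟨⟨h1, h2⟩, h3⟩
      rw [hinner i h1 h2] at h3
      split_ifs at h3 with h4
      exact ⟨h1, h4⟩
    · rintro ⟨h1, h2⟩
      have h2' : i < blockStart u (t + 1) := by omega
      exact ⟨⟨h1, h2'⟩, by rw [hinner i h1 h2', if_pos h2]⟩
  rw [scanCount, hlast, hones, Nat.card_Ioc]
  omega

end BlockCoding

theorem stmt5_general (S : Set Ordinal) (hS : S ⊆ Set.Ico (Ordinal.omega0) omega1)
    (ζ : Ordinal → ℕ → Ordinal) (hζ : ∀ α ∈ S, IsLadderAt α (ζ α))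
    (hunif : LambdaUnif S ζ 3)
    (h : Ordinal → ℕ → ℕ) :
    ∃ η : Ordinal → ℕ → Ordinal,
      (∀ α ∈ S, IsLadderAt α (η α)) ∧ UnifBelow S η h := by
  let η : Ordinal → ℕ → Ordinal := fun α n => historyCode (ζ α) (blockStart (h α) (n + 1))
  have hζω : ∀ α ∈ S, ∀ i, ζ α i < omega1 :=
    fun α hα i => ((hζ α hα).apply_lt i).trans (hS hα).2
  refine ⟨η, fun α hα => (hζ α hα).historyCode_comp (hS hα).2
    ((blockStart_strictMono _).comp (strictMono_id.add_const 1)), fun c hc => ?_⟩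
  obtain ⟨f, fs, hf⟩ := hunif (fun α => unaryCode (h α) (c α)) fun α _ i => unaryCode_lt_three _ i
  let point : S × ℕ → Ordinal := fun q => η q.1 q.2
  let decode : S × ℕ → ℕ := fun q => scanCount (f ∘ ζ q.1) (blockStart (h q.1) (q.2 + 1))
  have hdecode : decode.FactorsThrough point := by
    rintro ⟨⟨α, hα⟩, n⟩ ⟨⟨β, hβ⟩, m⟩ hαβ
    obtain ⟨hk, hagree⟩ := historyCode_inj (hζω α hα) hαβ
    simp only [decode, ← hk]
    exact scanCount_congr fun i hi => congrArg f (hagree i hi)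
  refine ⟨Function.extend point decode 0, fs, fun α hα n hn => ?_⟩
  refine (hdecode.extend_apply 0 (⟨α, hα⟩, n)).trans (scanCount_eq_of_eqOn_block (hc α hα) ?_)
  exact fun i hi => hf α hα i (hn.trans (((blockStart_strictMono _).id_le n).trans hi.1))

/-- If a ladder system `ζ` on `S ⊆ [ω, ω₁)` satisfies 3-uniformization and each
`h_α : ω → ω` takes positive values, then there is a ladder system `η` on `S` satisfying
`H`-uniformization. -/
theorem stmt5 (S : Set Ordinal) (hS : S ⊆ Set.Ico (Ordinal.omega0) omega1)
    (ζ : Ordinal → ℕ → Ordinal) (hζ : ∀ α ∈ S, IsLadderAt α (ζ α))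
    (hunif : LambdaUnif S ζ 3)
    (h : Ordinal → ℕ → ℕ) (hpos : ∀ α ∈ S, ∀ n, 0 < h α n) :
    ∃ η : Ordinal → ℕ → Ordinal,
      (∀ α ∈ S, IsLadderAt α (η α)) ∧ UnifBelow S η h :=
  stmt5_general S hS ζ hζ hunif h
end

section
/- Let S be a stationary subset of lim(ω₁). If every ladder system on S satisfies 2-uniformization, then every ladder system on S satisfies ω-uniformization. -/
/-! A natural number `k` is coded at an ordinal `β` by the pattern `1, …, 1, 0` (with `k` ones)
placed at the points `codePoint β 0, …, codePoint β k`. These points are distinct for distinct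
`(β, t)`, lie above `β` and below every limit ordinal above `β`. Given a ladder system `η` and
a colouring `c`, the code points of the pairs `(η δ n, t)` with `t ≤ c δ n` are, for each `δ`,
enumerated increasingly by a new ladder on `δ`. A 2-uniformization `f` of the induced 0/1
colouring agrees with the pattern coding `c δ n` at `η δ n` for all large `n`, so the position
of the first zero of `f` along `codePoint β ·` uniformizes `c`. -/

open Ordinal Set

section Enumeration

variable {α : Type*} [ConditionallyCompleteLinearOrderBot α] {T : Set α}

noncomputable def enumNat (T : Set α) : ℕ → α
  | 0 => sInf T
  | m + 1 => sInf (T ∩ Ioi (enumNat T m))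

lemma enumNat_le_of_forall_lt {p : α} (hp : p ∈ T) :
    ∀ m, (∀ k < m, enumNat T k < p) → enumNat T m ≤ p
  | 0, _ => csInf_le (OrderBot.bddBelow _) hp
  | m + 1, h => csInf_le (OrderBot.bddBelow _) ⟨hp, h m m.lt_succ_self⟩

variable [WellFoundedLT α]

lemma enumNat_mem (hne : T.Nonempty) (hmax : ∀ p ∈ T, ∃ q ∈ T, p < q) (m : ℕ) :
    enumNat T m ∈ T := by
  induction m with
  | zero => exact csInf_mem hne
  | succ m ih =>
    obtain ⟨q, hq, hlt⟩ := hmax _ ih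
    exact (csInf_mem (s := T ∩ Ioi _) ⟨q, hq, hlt⟩).1

lemma strictMono_enumNat (hne : T.Nonempty) (hmax : ∀ p ∈ T, ∃ q ∈ T, p < q) :
    StrictMono (enumNat T) := by
  refine strictMono_nat_of_lt_succ fun m => ?_
  obtain ⟨q, hq, hlt⟩ := hmax _ (enumNat_mem hne hmax m)
  exact (csInf_mem (s := T ∩ Ioi _) ⟨q, hq, hlt⟩).2

lemma range_enumNat (hne : T.Nonempty) (hmax : ∀ p ∈ T, ∃ q ∈ T, p < q)
    (hfin : ∀ p ∈ T, (T ∩ Iio p).Finite) : range (enumNat T) = T := by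
  refine Subset.antisymm (range_subset_iff.2 (enumNat_mem hne hmax)) fun p hp => ?_
  have hex : ∃ m, p ≤ enumNat T m := by
    by_contra! hlt
    refine infinite_range_of_injective (strictMono_enumNat hne hmax).injective
      ((hfin p hp).subset ?_)
    rintro _ ⟨m, rfl⟩
    exact ⟨enumNat_mem hne hmax m, hlt m⟩
  exact ⟨Nat.find hex, le_antisymm
    (enumNat_le_of_forall_lt hp _ fun k hk => not_le.1 (Nat.find_min hex hk)) (Nat.find_spec hex)⟩

end Enumeration

namespace IsLadderOn

variable {δ : Ordinal} {η : ℕ → Ordinal}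

lemma exists_lt (hη : IsLadderOn δ η) {β : Ordinal} (hβ : β < δ) : ∃ n, β < η n := by
  obtain ⟨n, hn⟩ := hη.2.2 β hβ
  exact ⟨n + 1, hn.trans_lt (hη.1 n.lt_succ_self)⟩

lemma isSuccLimit (hη : IsLadderOn δ η) : Order.IsSuccLimit δ := by
  refine Ordinal.isSuccLimit_iff.2 ⟨(pos_of_gt (hη.2.1 0)).ne',
    Order.isSuccPrelimit_iff_succ_lt.2 fun β hβ => ?_⟩
  obtain ⟨n, hn⟩ := hη.exists_lt hβ
  exact (Order.succ_le_of_lt hn).trans_lt (hη.2.1 n)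

end IsLadderOn

noncomputable def natMod (β : Ordinal) : ℕ := Cardinal.toNat (β % ω).card

lemma natCast_natMod (β : Ordinal) : (natMod β : Ordinal) = β % ω := by
  obtain ⟨k, hk⟩ := lt_omega0.1 (mod_lt β omega0_ne_zero)
  simp [natMod, hk]

noncomputable def codePoint (β : Ordinal) (t : ℕ) : Ordinal :=
  ω * (β / ω) + (Nat.pair (natMod β) t : ℕ)

lemma codePoint_div_omega0 (β : Ordinal) (t : ℕ) : codePoint β t / ω = β / ω := by
  rw [codePoint, mul_add_div _ omega0_ne_zero, div_eq_zero_of_lt (natCast_lt_omega0 _), add_zero]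

lemma natMod_codePoint (β : Ordinal) (t : ℕ) : natMod (codePoint β t) = Nat.pair (natMod β) t := by
  rw [← Nat.cast_inj (R := Ordinal), natCast_natMod, codePoint, mul_add_mod_self,
    mod_eq_of_lt (natCast_lt_omega0 _)]

lemma codePoint_injective2 : Function.Injective2 codePoint := by
  intro β β' t t' h
  have hmod := congrArg natMod h
  rw [natMod_codePoint, natMod_codePoint, Nat.pair_eq_pair] at hmod
  refine ⟨?_, hmod.2⟩
  rw [← div_add_mod β ω, ← div_add_mod β' ω, ← natCast_natMod, ← natCast_natMod, hmod.1,
    ← codePoint_div_omega0 β t, ← codePoint_div_omega0 β' t', h]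

lemma le_codePoint (β : Ordinal) (t : ℕ) : β ≤ codePoint β t := by
  conv_lhs => rw [← div_add_mod β ω, ← natCast_natMod]
  exact add_le_add_right (Nat.cast_le.2 (Nat.left_le_pair _ t)) _

lemma Order.IsSuccLimit.codePoint_lt {δ β : Ordinal} (hδ : Order.IsSuccLimit δ) (hβ : β < δ)
    (t : ℕ) : codePoint β t < δ :=
  hδ.add_natCast_lt ((mul_div_le β ω).trans_lt hβ) _

def codeSet (η : ℕ → Ordinal) (k : ℕ → ℕ) : Set Ordinal := ⋃ n, codePoint (η n) '' Iic (k n)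

open Classical in
noncomputable def codeColor (η : ℕ → Ordinal) (k : ℕ → ℕ) (p : Ordinal) : ℕ :=
  if ∃ n, ∃ t < k n, p = codePoint (η n) t then 1 else 0

lemma codeColor_lt_two (η : ℕ → Ordinal) (k : ℕ → ℕ) (p : Ordinal) : codeColor η k p < 2 := by
  unfold codeColor; split <;> omega

lemma codeColor_codePoint {η : ℕ → Ordinal} (hη : Function.Injective η) {k : ℕ → ℕ} {n t : ℕ}
    (ht : t ≤ k n) : codeColor η k (codePoint (η n) t) = if t < k n then 1 else 0 := by
  by_cases hlt : t < k n
  · rw [codeColor, if_pos ⟨n, t, hlt, rfl⟩, if_pos hlt]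
  · rw [codeColor, if_neg, if_neg hlt]
    rintro ⟨n', t', ht', h⟩
    obtain ⟨hn, rfl⟩ := codePoint_injective2 h
    rw [← hη hn] at ht'
    omega

noncomputable def decodeColor (f : Ordinal → ℕ) (β : Ordinal) : ℕ := sInf {t | f (codePoint β t) = 0}

lemma decodeColor_eq {f : Ordinal → ℕ} {β : Ordinal} {k : ℕ} (hk : f (codePoint β k) = 0)
    (hlt : ∀ t < k, f (codePoint β t) ≠ 0) : decodeColor f β = k :=
  le_antisymm (Nat.sInf_le hk) (le_csInf ⟨k, hk⟩ fun t ht => not_lt.1 fun h => hlt t h ht)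

namespace IsLadderOn

variable {δ : Ordinal} {η : ℕ → Ordinal}

lemma codeSet_subset (hη : IsLadderOn δ η) (k : ℕ → ℕ) : codeSet η k ⊆ Iio δ := by
  rintro _ ⟨_, ⟨n, rfl⟩, t, -, rfl⟩
  exact hη.isSuccLimit.codePoint_lt (hη.2.1 n) t

lemma exists_mem_codeSet_gt (hη : IsLadderOn δ η) (k : ℕ → ℕ) {β : Ordinal} (hβ : β < δ) :
    ∃ p ∈ codeSet η k, β < p := by
  obtain ⟨n, hn⟩ := hη.exists_lt hβ
  exact ⟨codePoint (η n) 0, mem_iUnion.2 ⟨n, 0, Nat.zero_le _, rfl⟩, hn.trans_le (le_codePoint _ _)⟩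

lemma codeSet_nonempty (hη : IsLadderOn δ η) (k : ℕ → ℕ) : (codeSet η k).Nonempty :=
  let ⟨p, hp, _⟩ := hη.exists_mem_codeSet_gt k (pos_of_gt (hη.2.1 0))
  ⟨p, hp⟩

lemma exists_codeSet_gt_of_mem (hη : IsLadderOn δ η) (k : ℕ → ℕ) :
    ∀ p ∈ codeSet η k, ∃ q ∈ codeSet η k, p < q := fun _ hp =>
  hη.exists_mem_codeSet_gt k (hη.codeSet_subset k hp)

lemma finite_codeSet_inter_Iio (hη : IsLadderOn δ η) (k : ℕ → ℕ) {β : Ordinal} (hβ : β < δ) :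
    (codeSet η k ∩ Iio β).Finite := by
  obtain ⟨N, hN⟩ := hη.exists_lt hβ
  refine ((finite_Iio N).biUnion fun n _ => (finite_Iic (k n)).image (codePoint (η n))).subset ?_
  rintro _ ⟨⟨_, ⟨n, rfl⟩, t, ht, rfl⟩, hlt⟩
  refine mem_biUnion (hη.1.lt_iff_lt.1 ?_) ⟨t, ht, rfl⟩
  exact (le_codePoint _ _).trans_lt (hlt.trans hN)

lemma range_enumNat_codeSet (hη : IsLadderOn δ η) (k : ℕ → ℕ) :
    range (enumNat (codeSet η k)) = codeSet η k :=
  range_enumNat (hη.codeSet_nonempty k) (hη.exists_codeSet_gt_of_mem k) fun _ hp =>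
    hη.finite_codeSet_inter_Iio k (hη.codeSet_subset k hp)

lemma enumNat_codeSet (hη : IsLadderOn δ η) (k : ℕ → ℕ) : IsLadderOn δ (enumNat (codeSet η k)) := by
  refine ⟨strictMono_enumNat (hη.codeSet_nonempty k) (hη.exists_codeSet_gt_of_mem k),
    fun m => hη.codeSet_subset k ((hη.range_enumNat_codeSet k).subset (mem_range_self m)),
    fun β hβ => ?_⟩
  obtain ⟨p, hp, hβp⟩ := hη.exists_mem_codeSet_gt k hβ
  rw [← hη.range_enumNat_codeSet k] at hp
  obtain ⟨m, rfl⟩ := hp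
  exact ⟨m, hβp.le⟩

lemma eq_codeColor_of_enumNat_lt (hη : IsLadderOn δ η) (k : ℕ → ℕ) {f : Ordinal → ℕ} {m₀ : ℕ}
    (hf : ∀ m, m₀ ≤ m → f (enumNat (codeSet η k) m) = codeColor η k (enumNat (codeSet η k) m))
    {p : Ordinal} (hp : p ∈ codeSet η k) (hlt : enumNat (codeSet η k) m₀ < p) :
    f p = codeColor η k p := by
  rw [← hη.range_enumNat_codeSet k] at hp
  obtain ⟨m, rfl⟩ := hp
  exact hf m ((hη.enumNat_codeSet k).1.lt_iff_lt.1 hlt).le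

lemma exists_decodeColor_eq (hη : IsLadderOn δ η) (k : ℕ → ℕ) {f : Ordinal → ℕ} {β₀ : Ordinal}
    (hβ₀ : β₀ < δ) (hf : ∀ p ∈ codeSet η k, β₀ < p → f p = codeColor η k p) :
    ∃ N, ∀ n ≥ N, decodeColor f (η n) = k n := by
  obtain ⟨N, hN⟩ := hη.exists_lt hβ₀
  refine ⟨N, fun n hn => ?_⟩
  have hval : ∀ t ≤ k n, f (codePoint (η n) t) = if t < k n then 1 else 0 := fun t ht =>
    (hf _ (mem_iUnion.2 ⟨n, t, ht, rfl⟩) ((hN.trans_le (hη.1.monotone hn)).trans_le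
      (le_codePoint _ _))).trans (codeColor_codePoint hη.1.injective ht)
  exact decodeColor_eq (by simpa using hval (k n) le_rfl) fun t ht => by simp [hval t ht.le, ht]

end IsLadderOn

theorem stmt8_general (S : Set Ordinal)
    (h2 : ∀ η : Ordinal → ℕ → Ordinal, (∀ δ ∈ S, IsLadderOn δ (η δ)) → LambdaUnif S η 2) :
    ∀ η : Ordinal → ℕ → Ordinal, (∀ δ ∈ S, IsLadderOn δ (η δ)) → OmegaUnif S η := by
  intro η hη c
  let ν δ := enumNat (codeSet (η δ) (c δ))
  obtain ⟨f, m₀, hf⟩ := h2 ν (fun δ hδ => (hη δ hδ).enumNat_codeSet (c δ))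
    (fun δ m => codeColor (η δ) (c δ) (ν δ m)) fun _ _ _ => codeColor_lt_two _ _ _
  have hdecode : ∀ δ ∈ S, ∃ N, ∀ n ≥ N, decodeColor f (η δ n) = c δ n := fun δ hδ =>
    (hη δ hδ).exists_decodeColor_eq (c δ) ((hη δ hδ).enumNat_codeSet (c δ) |>.2.1 (m₀ δ))
      fun _ => (hη δ hδ).eq_codeColor_of_enumNat_lt (c δ) (hf δ hδ)
  choose! N hN using hdecode
  exact ⟨decodeColor f, N, hN⟩

/-- Let `S` be a stationary subset of `lim(ω₁)`.  If every ladder system on `S` satisfies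
2-uniformization, then every ladder system on `S` satisfies `ω`-uniformization. -/
theorem stmt8 (S : Set Ordinal) (hS : ∀ δ ∈ S, δ < omega1 ∧ Order.IsSuccLimit δ)
    (hstat : IsStat S)
    (h2 : ∀ η : Ordinal → ℕ → Ordinal, (∀ δ ∈ S, IsLadderOn δ (η δ)) → LambdaUnif S η 2) :
    ∀ η : Ordinal → ℕ → Ordinal, (∀ δ ∈ S, IsLadderOn δ (η δ)) → OmegaUnif S η :=
  stmt8_general S h2
end
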